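/- arXiv:1312.0210 — 2 statements merged into one kernel-verified Lean document; each statement's English description precedes it below -/
import Mathlib

section
/- Let G = (A ⊎ B, E) be a (2,2)-Laman bipartite graph with every vertex of degree at least three, let a_0 ∈ A have degree three with neighbors b_1, b_2, b_3 ∈ B, and let Z ⊆ V be a maximal set containing b_1 and b_2 but not a_0 such that E(Z) = 2|Z| − 4 (possibly Z = {b_1, b_2}). Then b_3 ∉ Z, b_3 has at most one neighbor in Z, and consequently b_3 has a neighbor in A \ (Z ∪ {a_0}), so this set is nonempty. -/
open SimpleGraph

/-- The number of edges of the induced subgraph of `G` on a set `X` of vertices. -/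
noncomputable def edgesIn {V : Type*} (G : SimpleGraph V) (X : Set V) : ℕ :=
  (G.induce X).edgeSet.ncard

/-- A finite graph `G`, with bipartition `(A, B)` of its vertex set, is `(2,2)`-Laman if
`|A|, |B| ≥ 2`, every edge joins `A` to `B`, `G` has exactly `2(|A|+|B|) - 4` edges, and
every subgraph on at least `3` vertices has at most `2·(number of its vertices) - 4`
edges. -/
structure IsLaman22 {V : Type*} [Fintype V] (G : SimpleGraph V) (A B : Finset V) :
    Prop where
  cover : ∀ v : V, v ∈ A ∨ v ∈ B
  disj : Disjoint A B
  bip : ∀ ⦃x y⦄, G.Adj x y → (x ∈ A ∧ y ∈ B) ∨ (x ∈ B ∧ y ∈ A)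
  cardA : 2 ≤ A.card
  cardB : 2 ≤ B.card
  total : G.edgeSet.ncard = 2 * (A.card + B.card) - 4
  sparse : ∀ X : Finset V, 3 ≤ X.card → edgesIn G ↑X ≤ 2 * X.card - 4

/-- A set `X` of vertices is critical if `|X| ≥ 3` and the induced subgraph on `X` has
exactly `2|X| - 4` edges. -/
def IsCritical {V : Type*} (G : SimpleGraph V) (X : Finset V) : Prop :=
  3 ≤ X.card ∧ edgesIn G ↑X = 2 * X.card - 4

lemma edgesIn_eq {V : Type*} (G : SimpleGraph V) (X : Set V) :
    edgesIn G X = {e ∈ G.edgeSet | ∀ u ∈ e, u ∈ X}.ncard := by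
  rw [edgesIn, ← Set.ncard_image_of_injective _ (Sym2.map.injective Subtype.val_injective)]
  congr 1
  ext e
  constructor
  · rintro ⟨e', he', rfl⟩
    induction e' using Sym2.ind with
    | _ x y =>
      simp only [mem_edgeSet, comap_adj, Function.Embedding.coe_subtype] at he'
      refine ⟨he', ?_⟩
      intro u hu
      rw [Sym2.map_pair_eq, Sym2.mem_iff] at hu
      rcases hu with rfl | rfl
      · exact x.2
      · exact y.2
  · intro ⟨he, hX⟩
    induction e using Sym2.ind with
    | _ a b =>
      refine ⟨s(⟨a, hX a (by simp)⟩, ⟨b, hX b (by simp)⟩), ?_, by simp⟩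
      simpa using he

lemma edgesIn_insert_ge {V : Type*} [Fintype V] (G : SimpleGraph V) (X : Set V) (v : V)
    (hv : v ∉ X) :
    edgesIn G X + (G.neighborSet v ∩ X).ncard ≤ edgesIn G (insert v X) := by
  rw [edgesIn_eq, edgesIn_eq]
  set S1 : Set (Sym2 V) := {e ∈ G.edgeSet | ∀ u ∈ e, u ∈ X} with hS1
  set S2 : Set (Sym2 V) := (fun w => s(v,w)) '' (G.neighborSet v ∩ X) with hS2
  have hinj : Function.Injective (fun w : V => s(v,w)) := by
    intro a b h
    exact Sym2.congr_right.mp h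
  have hsub : S1 ∪ S2 ⊆ {e ∈ G.edgeSet | ∀ u ∈ e, u ∈ insert v X} := by
    rintro e (⟨he, hX⟩ | ⟨w, ⟨hadj, hw⟩, rfl⟩)
    · exact ⟨he, fun u hu => Set.mem_insert_of_mem _ (hX u hu)⟩
    · refine ⟨hadj, ?_⟩
      intro u hu
      rw [Sym2.mem_iff] at hu
      rcases hu with rfl | rfl
      · exact Set.mem_insert _ _
      · exact Set.mem_insert_of_mem _ hw
  have hdisj : Disjoint S1 S2 := by
    rw [Set.disjoint_left]
    rintro e ⟨_, hX⟩ ⟨w, _, rfl⟩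
    exact hv (hX v (by simp))
  have hcard : S2.ncard = (G.neighborSet v ∩ X).ncard :=
    Set.ncard_image_of_injective _ hinj
  rw [← hcard]
  calc S1.ncard + S2.ncard = (S1 ∪ S2).ncard := by
        rw [Set.ncard_union_eq hdisj (Set.toFinite _) (Set.toFinite _)]
    _ ≤ _ := Set.ncard_le_ncard hsub (Set.toFinite _)

/-- Let `G` be a `(2,2)`-Laman bipartite graph with minimum degree at
least three, let `a₀ ∈ A` have degree three with neighbors `b₁, b₂, b₃`, and let `Z` be a
maximal set containing `b₁` and `b₂` but not `a₀` such that `E(Z) = 2|Z| - 4`. Then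
`b₃ ∉ Z`, `b₃` has at most one neighbor in `Z`, and `b₃` has a neighbor in
`A \ (Z ∪ {a₀})`; in particular this set is nonempty. -/
theorem laman_b3_outside {V : Type*} [Fintype V] (G : SimpleGraph V)
    [DecidableRel G.Adj] (A B : Finset V) (hL : IsLaman22 G A B)
    (hmin : ∀ u : V, 3 ≤ G.degree u)
    (a₀ : V) (ha₀ : a₀ ∈ A) (hdeg : G.degree a₀ = 3)
    (b₁ b₂ b₃ : V) (h12 : b₁ ≠ b₂) (h13 : b₁ ≠ b₃) (h23 : b₂ ≠ b₃)
    (hnbrs : G.neighborSet a₀ = {b₁, b₂, b₃})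
    (Z : Finset V) (hb₁Z : b₁ ∈ Z) (hb₂Z : b₂ ∈ Z) (ha₀Z : a₀ ∉ Z)
    (hZ : edgesIn G ↑Z = 2 * Z.card - 4)
    (hZmax : ∀ Z' : Finset V, Z ⊆ Z' → b₁ ∈ Z' → b₂ ∈ Z' → a₀ ∉ Z' →
      edgesIn G ↑Z' = 2 * Z'.card - 4 → Z' = Z) :
    b₃ ∉ Z ∧ (G.neighborSet b₃ ∩ ↑Z).ncard ≤ 1 ∧
      ∃ a ∈ A, a ∉ Z ∧ a ≠ a₀ ∧ G.Adj b₃ a := by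
  classical
  have hadj3 : G.Adj a₀ b₃ := by
    have : b₃ ∈ G.neighborSet a₀ := by rw [hnbrs]; simp
    exact this
  have hZ2 : 2 ≤ Z.card := by
    have : ({b₁, b₂} : Finset V) ⊆ Z := by
      intro x hx; simp at hx; rcases hx with rfl | rfl <;> assumption
    calc 2 = ({b₁, b₂} : Finset V).card := by rw [Finset.card_pair h12]
      _ ≤ Z.card := Finset.card_le_card this
  -- Step 1 : b₃ ∉ Z
  have hb₃Z : b₃ ∉ Z := by
    intro hb₃Z
    have hlow := edgesIn_insert_ge G (↑Z) a₀ (by simpa using ha₀Z)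
    have h3 : 3 ≤ (G.neighborSet a₀ ∩ ↑Z).ncard := by
      have hsub : ({b₁, b₂, b₃} : Set V) ⊆ G.neighborSet a₀ ∩ ↑Z := by
        rw [hnbrs]
        intro x hx
        refine ⟨hx, ?_⟩
        simp only [Set.mem_insert_iff, Set.mem_singleton_iff] at hx
        rcases hx with rfl | rfl | rfl <;> simpa
      have h3' : ({b₁, b₂, b₃} : Set V).ncard = 3 := by
        rw [Set.ncard_insert_of_notMem (by simp [h12, h13]) (Set.toFinite _),
          Set.ncard_pair h23]
      rw [← h3']
      exact Set.ncard_le_ncard hsub (Set.toFinite _)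
    have hup := hL.sparse (insert a₀ Z) (by rw [Finset.card_insert_of_notMem ha₀Z]; omega)
    rw [Finset.coe_insert, Finset.card_insert_of_notMem ha₀Z] at hup
    omega
  -- Step 2 : at most one neighbor of b₃ in Z
  have hle1 : (G.neighborSet b₃ ∩ ↑Z).ncard ≤ 1 := by
    by_contra h
    push_neg at h
    have hlow := edgesIn_insert_ge G (↑Z) b₃ (by simpa using hb₃Z)
    have hup := hL.sparse (insert b₃ Z) (by rw [Finset.card_insert_of_notMem hb₃Z]; omega)
    rw [Finset.coe_insert, Finset.card_insert_of_notMem hb₃Z] at hup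
    have heq : edgesIn G ↑(insert b₃ Z) = 2 * (insert b₃ Z).card - 4 := by
      rw [Finset.coe_insert, Finset.card_insert_of_notMem hb₃Z]
      omega
    have := hZmax (insert b₃ Z) (Finset.subset_insert _ _)
      (Finset.mem_insert_of_mem hb₁Z) (Finset.mem_insert_of_mem hb₂Z)
      (by simp [Finset.mem_insert, ha₀Z, (G.ne_of_adj hadj3)]) heq
    exact hb₃Z (this ▸ Finset.mem_insert_self b₃ Z)
  refine ⟨hb₃Z, hle1, ?_⟩
  -- Step 3
  by_contra hno
  push_neg at hno
  have hb₃B : b₃ ∈ B := by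
    rcases hL.bip hadj3 with ⟨_, h⟩ | ⟨h, _⟩
    · exact h
    · exact absurd ha₀ (Finset.disjoint_right.mp hL.disj h)
  have hsub : G.neighborSet b₃ ⊆ (G.neighborSet b₃ ∩ ↑Z) ∪ {a₀} := by
    intro u hu
    have huA : u ∈ A := by
      rcases hL.bip hu with ⟨h, _⟩ | ⟨_, h⟩
      · exact absurd hb₃B (Finset.disjoint_left.mp hL.disj h)
      · exact h
    by_cases huZ : u ∈ Z
    · exact Or.inl ⟨hu, huZ⟩
    · by_cases hua : u = a₀
      · exact Or.inr (by simp [hua])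
      · exact absurd hu (hno u huA huZ hua)
  have hdegset : (G.neighborSet b₃).ncard = G.degree b₃ := by
    rw [degree, neighborFinset_def, Set.ncard_eq_toFinset_card']
  have := Set.ncard_le_ncard hsub (Set.toFinite _)
  have hunion := Set.ncard_union_le (G.neighborSet b₃ ∩ ↑Z) ({a₀} : Set V)
  rw [Set.ncard_singleton] at hunion
  have h3 := hmin b₃
  omega
end

section
/- K_{3,3} is a bipartite minor of the barycentric subdivision of K_{3,3}, that is, of the bipartite graph obtained from K_{3,3} by subdividing every edge exactly once, with the bipartition in which the six original vertices form one side and the nine subdivision vertices form the other side. -/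
/-- A finite simple graph with vertex set a finite subset of `ℕ`. -/
structure NatGraph where
  verts : Finset ℕ
  Adj : ℕ → ℕ → Prop
  symm : ∀ ⦃x y⦄, Adj x y → Adj y x
  loopless : ∀ x, ¬ Adj x x
  mem_of_adj : ∀ ⦃x y⦄, Adj x y → x ∈ verts ∧ y ∈ verts

namespace NatGraph

/-- The underlying `SimpleGraph` on `ℕ`. -/
def toSimpleGraph (G : NatGraph) : SimpleGraph ℕ where
  Adj := G.Adj
  symm := ⟨fun _ _ h => G.symm h⟩
  loopless := ⟨fun x h => G.loopless x h⟩

/-- A graph is bipartite if its vertices can be properly 2-colored. -/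
def IsBipartite (G : NatGraph) : Prop :=
  ∃ c : ℕ → Bool, ∀ ⦃x y⦄, G.Adj x y → c x ≠ c y

/-- Delete a set of vertices (and all incident edges). -/
def deleteVerts (G : NatGraph) (S : Finset ℕ) : NatGraph where
  verts := G.verts \ S
  Adj x y := G.Adj x y ∧ x ∉ S ∧ y ∉ S
  symm := fun _ _ h => ⟨G.symm h.1, h.2.2, h.2.1⟩
  loopless := fun x h => G.loopless x h.1
  mem_of_adj := fun x y h => by
    obtain ⟨hx, hy⟩ := G.mem_of_adj h.1
    exact ⟨Finset.mem_sdiff.2 ⟨hx, h.2.1⟩, Finset.mem_sdiff.2 ⟨hy, h.2.2⟩⟩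

/-- Delete a single vertex. -/
def deleteVert (G : NatGraph) (x : ℕ) : NatGraph := G.deleteVerts {x}

/-- Delete a single edge. -/
def deleteEdge (G : NatGraph) (x y : ℕ) : NatGraph where
  verts := G.verts
  Adj a b := G.Adj a b ∧ ¬((a = x ∧ b = y) ∨ (a = y ∧ b = x))
  symm := fun _ _ h => ⟨G.symm h.1, fun hc => h.2 (by tauto)⟩
  loopless := fun a h => G.loopless a h.1
  mem_of_adj := fun _ _ h => G.mem_of_adj h.1

/-- Contraction of a vertex `u` with a vertex `v`: identify `u` with `v`
(deleting one copy of each resulting double edge). -/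
def contract (G : NatGraph) (u v : ℕ) : NatGraph where
  verts := G.verts.erase u
  Adj a b := a ≠ b ∧ a ∈ G.verts.erase u ∧ b ∈ G.verts.erase u ∧
    ∃ p q, G.Adj p q ∧ (if p = u then v else p) = a ∧ (if q = u then v else q) = b
  symm := fun a b h => ⟨h.1.symm, h.2.2.1, h.2.1, by
    obtain ⟨p, q, h1, h2, h3⟩ := h.2.2.2
    exact ⟨q, p, G.symm h1, h3, h2⟩⟩
  loopless := fun a h => h.1 rfl
  mem_of_adj := fun _ _ h => ⟨h.2.1, h.2.2.1⟩

/-- The number of connected components of a graph (on its vertex set). -/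
noncomputable def numComponents (G : NatGraph) : ℕ :=
  Nat.card (SimpleGraph.induce (G.verts : Set ℕ) G.toSimpleGraph).ConnectedComponent

/-- A cycle is peripheral if it is induced (no two nonadjacent vertices of the
cycle are joined by an edge of `G`) and non-separating (deleting its vertices
does not increase the number of connected components). -/
def Peripheral (G : NatGraph) {a : ℕ} (C : G.toSimpleGraph.Walk a a) : Prop :=
  C.IsCycle ∧
  (∀ x ∈ C.support, ∀ y ∈ C.support, G.Adj x y → s(x, y) ∈ C.edges) ∧
  (G.deleteVerts C.support.toFinset).numComponents ≤ G.numComponents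

/-- A contraction of `u` with `v` is admissible if they have a common neighbor `w`
such that the path `(u, w, v)` is part of a peripheral cycle. -/
def AdmissibleContraction (G : NatGraph) (u v : ℕ) : Prop :=
  u ≠ v ∧ ∃ (w a : ℕ) (C : G.toSimpleGraph.Walk a a),
    G.Adj u w ∧ G.Adj w v ∧ G.Peripheral C ∧ s(u, w) ∈ C.edges ∧ s(w, v) ∈ C.edges

/-- One step in the formation of a bipartite minor: deletion of a vertex,
deletion of an edge, or an admissible contraction. -/
inductive MinorStep : NatGraph → NatGraph → Prop
  | deleteVert (G : NatGraph) (x : ℕ) : MinorStep (G.deleteVert x) G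
  | deleteEdge (G : NatGraph) (x y : ℕ) (h : G.Adj x y) : MinorStep (G.deleteEdge x y) G
  | contract (G : NatGraph) (u v : ℕ) (h : G.AdmissibleContraction u v) :
      MinorStep (G.contract u v) G

/-- `H` is a bipartite minor of `G` if it is obtained from `G` by a finite sequence
of vertex deletions, edge deletions, and admissible contractions. -/
def IsBipMinorOf (H G : NatGraph) : Prop := Relation.ReflTransGen MinorStep H G

/-- `H` is a subgraph of `G`. -/
def IsSubgraphOf (H G : NatGraph) : Prop :=
  H.verts ⊆ G.verts ∧ ∀ ⦃x y⦄, H.Adj x y → G.Adj x y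

/-- `G` is (a copy of) the complete bipartite graph `K_{m,n}`. -/
def IsCompleteBipartiteOn (G : NatGraph) (m n : ℕ) : Prop :=
  ∃ S T : Finset ℕ, S.card = m ∧ T.card = n ∧ Disjoint S T ∧ G.verts = S ∪ T ∧
    ∀ x y, G.Adj x y ↔ ((x ∈ S ∧ y ∈ T) ∨ (x ∈ T ∧ y ∈ S))

/-- `G` is (a copy of) the complete graph `K_n`. -/
def IsCompleteOn (G : NatGraph) (n : ℕ) : Prop :=
  ∃ S : Finset ℕ, S.card = n ∧ G.verts = S ∧
    ∀ x y, G.Adj x y ↔ (x ∈ S ∧ y ∈ S ∧ x ≠ y)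

/-- Witness data exhibiting `H` as a subdivision of `K` : for each edge `xy` of `K`,
`P x y` is the list of interior vertices of the path of `H` replacing `xy`. -/
structure IsSubdivDataOf (K H : NatGraph) (P : ℕ → ℕ → List ℕ) : Prop where
  verts_subset : K.verts ⊆ H.verts
  rev : ∀ ⦃x y⦄, K.Adj x y → P y x = (P x y).reverse
  interior_new : ∀ ⦃x y⦄, K.Adj x y → ∀ z ∈ P x y, z ∉ K.verts
  nodup : ∀ ⦃x y⦄, K.Adj x y → (x :: (P x y ++ [y])).Nodup
  disj : ∀ ⦃x y a b⦄, K.Adj x y → K.Adj a b → s(x, y) ≠ s(a, b) →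
    ∀ z ∈ P x y, z ∉ P a b
  verts_eq : (H.verts : Set ℕ) = ↑K.verts ∪ {z | ∃ x y, K.Adj x y ∧ z ∈ P x y}
  adj_iff : ∀ a b, H.Adj a b ↔ ∃ x y, K.Adj x y ∧ [a, b] <:+: (x :: (P x y ++ [y]))

/-- `H` is a subdivision of `K`. -/
def IsSubdivisionOf (H K : NatGraph) : Prop := ∃ P, IsSubdivDataOf K H P

/-- `G` contains `K_{3,3}` as a bipartite minor. -/
def HasK33BipMinor (G : NatGraph) : Prop :=
  ∃ H : NatGraph, H.IsCompleteBipartiteOn 3 3 ∧ H.IsBipMinorOf G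

end NatGraph

/-!
In the subdivision of `K₃,₃` with sides `s₀, s₁, s₂` and `t₀, t₁, t₂`, write `zᵢⱼ` for the vertex
subdividing `sᵢtⱼ`. For each column `j`, the path `z₁ⱼ tⱼ z₀ⱼ` lies on an induced cycle whose
removal leaves the rest of the graph connected, so `z₁ⱼ` may be contracted onto `z₀ⱼ`; likewise
`z₂ⱼ`. Deleting `tⱼ` afterwards leaves `z₀ⱼ` adjacent to exactly `s₀, s₁, s₂`, and after the three
columns what remains is `K₃,₃` on `{sᵢ} ∪ {z₀ⱼ}`. This sequence of nine operations is checked by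
computation on a copy with vertex set `{0, …, 14}`, and transported to any barycentric subdivision
of `K₃,₃` along the relabelling of `ℕ` that identifies it with that copy.
-/

namespace NatGraph

theorem ext {G H : NatGraph} (hv : G.verts = H.verts) (ha : ∀ x y, G.Adj x y ↔ H.Adj x y) :
    G = H := by
  obtain ⟨_, GAdj, _⟩ := G
  obtain ⟨_, HAdj, _⟩ := H
  obtain rfl : GAdj = HAdj := funext₂ fun x y => propext (ha x y)
  cases hv
  rfl

section EdgeList

def ofEdges (s : Finset ℕ) (E : List (ℕ × ℕ))
    (h : ∀ p ∈ E, p.1 ∈ s ∧ p.2 ∈ s ∧ p.1 ≠ p.2) : NatGraph where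
  verts := s
  Adj x y := (x, y) ∈ E ∨ (y, x) ∈ E
  symm _ _ hxy := hxy.symm
  loopless x hx := by rcases hx with hx | hx <;> exact (h _ hx).2.2 rfl
  mem_of_adj x y hxy := by
    rcases hxy with hx | hx
    · exact ⟨(h _ hx).1, (h _ hx).2.1⟩
    · exact ⟨(h _ hx).2.1, (h _ hx).1⟩

variable {s : Finset ℕ} {E : List (ℕ × ℕ)} {h : ∀ p ∈ E, p.1 ∈ s ∧ p.2 ∈ s ∧ p.1 ≠ p.2}

theorem ofEdges_adj {x y : ℕ} : (ofEdges s E h).Adj x y ↔ (x, y) ∈ E ∨ (y, x) ∈ E := .rfl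

instance : DecidableRel (ofEdges s E h).Adj := fun _ _ => inferInstanceAs (Decidable (_ ∨ _))

instance {G : NatGraph} [DecidableRel G.Adj] : DecidableRel G.toSimpleGraph.Adj :=
  inferInstanceAs (DecidableRel G.Adj)

instance {G : NatGraph} [DecidableRel G.Adj] (S : Finset ℕ) : DecidableRel (G.deleteVerts S).Adj :=
  fun _ _ => inferInstanceAs (Decidable (_ ∧ _))

def deleteVertsEdges (S : Finset ℕ) (E : List (ℕ × ℕ)) : List (ℕ × ℕ) :=
  E.filter fun p => p.1 ∉ S ∧ p.2 ∉ S

theorem deleteVerts_ofEdges (S : Finset ℕ) (h') :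
    (ofEdges s E h).deleteVerts S = ofEdges (s \ S) (deleteVertsEdges S E) h' :=
  NatGraph.ext rfl fun a b => by
    simp only [deleteVerts, ofEdges_adj, deleteVertsEdges, List.mem_filter, decide_eq_true_eq]
    tauto

def rename (u v x : ℕ) : ℕ := if x = u then v else x

theorem rename_mem_erase {u v x : ℕ} (hx : x ∈ s) (hv : v ∈ s) (hvu : v ≠ u) :
    rename u v x ∈ s.erase u := by
  unfold rename
  split_ifs with hxu
  · exact Finset.mem_erase.2 ⟨hvu, hv⟩
  · exact Finset.mem_erase.2 ⟨hxu, hx⟩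

def contractEdges (u v : ℕ) (E : List (ℕ × ℕ)) : List (ℕ × ℕ) :=
  (E.map fun p => (rename u v p.1, rename u v p.2)).filter fun p => p.1 ≠ p.2

theorem contract_ofEdges {u v : ℕ} (hv : v ∈ s) (hvu : v ≠ u) (h') :
    (ofEdges s E h).contract u v = ofEdges (s.erase u) (contractEdges u v E) h' := by
  refine NatGraph.ext rfl fun a b => ?_
  simp only [contract, ofEdges_adj, contractEdges, List.mem_filter, List.mem_map,
    decide_eq_true_eq, Prod.mk.injEq, Prod.exists]
  constructor
  · rintro ⟨hab, -, -, p, q, hpq | hqp, rfl, rfl⟩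
    · exact .inl ⟨⟨p, q, hpq, rfl, rfl⟩, hab⟩
    · exact .inr ⟨⟨q, p, hqp, rfl, rfl⟩, Ne.symm hab⟩
  · rintro (⟨⟨p, q, hpq, rfl, rfl⟩, hab⟩ | ⟨⟨p, q, hpq, rfl, rfl⟩, hab⟩)
    · exact ⟨hab, rename_mem_erase (h _ hpq).1 hv hvu, rename_mem_erase (h _ hpq).2.1 hv hvu,
        p, q, .inl hpq, rfl, rfl⟩
    · exact ⟨Ne.symm hab, rename_mem_erase (h _ hpq).2.1 hv hvu,
        rename_mem_erase (h _ hpq).1 hv hvu, q, p, .inr hpq, rfl, rfl⟩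

theorem MinorStep.ofEdges_deleteVert (x : ℕ) {h'} :
    MinorStep (ofEdges (s \ {x}) (deleteVertsEdges {x} E) h') (ofEdges s E h) := by
  rw [← deleteVerts_ofEdges]
  exact .deleteVert _ x

theorem MinorStep.ofEdges_contract {u v : ℕ} {h'}
    (hadm : (ofEdges s E h).AdmissibleContraction u v) :
    MinorStep (ofEdges (s.erase u) (contractEdges u v E) h') (ofEdges s E h) := by
  obtain ⟨huv, w, -, -, -, hwv, -⟩ := id hadm
  rw [← contract_ofEdges (h := h) ((ofEdges s E h).mem_of_adj hwv).2 huv.symm]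
  exact .contract _ u v hadm

theorem isCompleteBipartiteOn_ofEdges {m n : ℕ} (S T : Finset ℕ) (hS : S.card = m)
    (hT : T.card = n) (hst : Disjoint S T) (hs : s = S ∪ T)
    (hE : ∀ p ∈ E, (p.1 ∈ S ∧ p.2 ∈ T) ∨ (p.1 ∈ T ∧ p.2 ∈ S))
    (hcomplete : ∀ x ∈ S, ∀ y ∈ T, (x, y) ∈ E ∨ (y, x) ∈ E) :
    (ofEdges s E h).IsCompleteBipartiteOn m n := by
  refine ⟨S, T, hS, hT, hst, hs, fun x y => ⟨?_, ?_⟩⟩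
  · rintro (hxy | hyx)
    · exact hE _ hxy
    · exact (hE _ hyx).symm.imp And.symm And.symm
  · rintro (⟨hx, hy⟩ | ⟨hx, hy⟩)
    · exact hcomplete x hx y hy
    · exact (hcomplete y hy x hx).symm

end EdgeList

section Components

theorem numComponents_le_one_of_rank (G : NatGraph) (hub : ℕ) (r : ℕ → ℕ) (hhub : hub ∈ G.verts)
    (h : ∀ v ∈ G.verts, v ≠ hub → ∃ u ∈ G.verts, G.Adj v u ∧ r u < r v) :
    G.numComponents ≤ 1 := by
  set H := SimpleGraph.induce (G.verts : Set ℕ) G.toSimpleGraph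
  have reach_hub (v : ℕ) (hv : v ∈ G.verts) : H.Reachable ⟨v, hv⟩ ⟨hub, hhub⟩ := by
    induction hr : r v using Nat.strong_induction_on generalizing v with
    | _ n ih =>
      by_cases hvh : v = hub
      · subst hvh; rfl
      · obtain ⟨u, hu, hvu, hlt⟩ := h v hv hvh
        exact (show H.Adj ⟨v, hv⟩ ⟨u, hu⟩ from hvu).reachable.trans (ih _ (hr ▸ hlt) u hu rfl)
  have : Subsingleton H.ConnectedComponent :=
    ⟨SimpleGraph.ConnectedComponent.ind₂ fun x y => SimpleGraph.ConnectedComponent.sound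
      ((reach_hub x.1 x.2).trans (reach_hub y.1 y.2).symm)⟩
  exact Finite.card_le_one_iff_subsingleton.2 this

theorem one_le_numComponents {G : NatGraph} (h : G.verts.Nonempty) : 1 ≤ G.numComponents := by
  obtain ⟨x, hx⟩ := h
  have : Nonempty (SimpleGraph.induce (G.verts : Set ℕ) G.toSimpleGraph).ConnectedComponent :=
    ⟨SimpleGraph.connectedComponentMk _ ⟨x, hx⟩⟩
  exact Nat.one_le_iff_ne_zero.2 Nat.card_pos.ne'

theorem peripheral_of_rank {G : NatGraph} {a : ℕ} {C : G.toSimpleGraph.Walk a a}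
    (hC : C.IsCycle) (hind : ∀ x ∈ C.support, ∀ y ∈ C.support, G.Adj x y → s(x, y) ∈ C.edges)
    (hub : ℕ) (r : ℕ → ℕ) (hhub : hub ∈ (G.deleteVerts C.support.toFinset).verts)
    (hrank : ∀ v ∈ (G.deleteVerts C.support.toFinset).verts, v ≠ hub →
      ∃ u ∈ (G.deleteVerts C.support.toFinset).verts,
        (G.deleteVerts C.support.toFinset).Adj v u ∧ r u < r v) :
    G.Peripheral C :=
  ⟨hC, hind, (numComponents_le_one_of_rank _ hub r hhub hrank).trans
    (one_le_numComponents ⟨hub, (Finset.mem_sdiff.1 hhub).1⟩)⟩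

theorem Peripheral.admissibleContraction {G : NatGraph} {a u w v : ℕ}
    {C : G.toSimpleGraph.Walk a a} (hC : G.Peripheral C) (huv : u ≠ v)
    (huw : s(u, w) ∈ C.edges) (hwv : s(w, v) ∈ C.edges) : G.AdmissibleContraction u v :=
  ⟨huv, w, a, C, C.adj_of_mem_edges huw, C.adj_of_mem_edges hwv, hC, huw, hwv⟩

end Components

section Map

variable (f : ℕ ↪ ℕ)

def map (G : NatGraph) : NatGraph where
  verts := G.verts.map f
  Adj a b := ∃ p q, G.Adj p q ∧ f p = a ∧ f q = b
  symm _ _ := fun ⟨p, q, hpq, hp, hq⟩ => ⟨q, p, G.symm hpq, hq, hp⟩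
  loopless _ := fun ⟨p, _, hpq, hp, hq⟩ => G.loopless p (f.injective (hp.trans hq.symm) ▸ hpq)
  mem_of_adj _ _ := fun ⟨_, _, hpq, hp, hq⟩ =>
    ⟨hp ▸ Finset.mem_map_of_mem f (G.mem_of_adj hpq).1,
      hq ▸ Finset.mem_map_of_mem f (G.mem_of_adj hpq).2⟩

variable {f}

theorem map_adj_apply {G : NatGraph} {x y : ℕ} : (G.map f).Adj (f x) (f y) ↔ G.Adj x y := by
  simp only [map, f.injective.eq_iff]
  exact ⟨fun ⟨_, _, h, hp, hq⟩ => hp ▸ hq ▸ h, fun h => ⟨x, y, h, rfl, rfl⟩⟩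

theorem map_deleteVerts (G : NatGraph) (S : Finset ℕ) :
    (G.deleteVerts S).map f = (G.map f).deleteVerts (S.map f) := by
  refine NatGraph.ext (Finset.map_sdiff ..) fun a b => ?_
  simp only [map, deleteVerts]
  constructor
  · rintro ⟨p, q, ⟨hpq, hp, hq⟩, rfl, rfl⟩
    exact ⟨⟨p, q, hpq, rfl, rfl⟩, by simpa using hp, by simpa using hq⟩
  · rintro ⟨⟨p, q, hpq, rfl, rfl⟩, hp, hq⟩
    exact ⟨p, q, ⟨hpq, by simpa using hp, by simpa using hq⟩, rfl, rfl⟩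

theorem map_deleteVert (G : NatGraph) (x : ℕ) :
    (G.deleteVert x).map f = (G.map f).deleteVert (f x) := by
  rw [deleteVert, deleteVert, map_deleteVerts, Finset.map_singleton]

theorem map_deleteEdge (G : NatGraph) (x y : ℕ) :
    (G.deleteEdge x y).map f = (G.map f).deleteEdge (f x) (f y) := by
  refine NatGraph.ext rfl fun a b => ?_
  simp only [map, deleteEdge]
  constructor
  · rintro ⟨p, q, ⟨hpq, hne⟩, rfl, rfl⟩
    exact ⟨⟨p, q, hpq, rfl, rfl⟩, by simpa only [f.injective.eq_iff] using hne⟩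
  · rintro ⟨⟨p, q, hpq, rfl, rfl⟩, hne⟩
    exact ⟨p, q, ⟨hpq, by simpa only [f.injective.eq_iff] using hne⟩, rfl, rfl⟩

theorem map_rename (u v x : ℕ) : f (rename u v x) = rename (f u) (f v) (f x) := by
  simp only [rename, f.injective.eq_iff]
  split_ifs <;> rfl

theorem map_contract (G : NatGraph) {u v : ℕ} (hv : v ∈ G.verts) (hvu : v ≠ u) :
    (G.contract u v).map f = (G.map f).contract (f u) (f v) := by
  refine NatGraph.ext (Finset.map_erase ..) fun a b => ⟨?_, ?_⟩
  · rintro ⟨p, q, ⟨hpq, hp, hq, p', q', hA, rfl, rfl⟩, rfl, rfl⟩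
    refine ⟨f.injective.ne hpq, ?_, ?_, f p', f q', ⟨p', q', hA, rfl, rfl⟩,
      (map_rename u v p').symm, (map_rename u v q').symm⟩
    · exact Finset.map_erase f G.verts u ▸ Finset.mem_map_of_mem f hp
    · exact Finset.map_erase f G.verts u ▸ Finset.mem_map_of_mem f hq
  · rintro ⟨hab, -, -, -, -, ⟨p', q', hA, rfl, rfl⟩, rfl, rfl⟩
    refine ⟨rename u v p', rename u v q', ⟨?_, rename_mem_erase (G.mem_of_adj hA).1 hv hvu,
      rename_mem_erase (G.mem_of_adj hA).2 hv hvu, p', q', hA, rfl, rfl⟩,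
      map_rename u v p', map_rename u v q'⟩
    intro hc
    apply hab
    change rename (f u) (f v) (f p') = rename (f u) (f v) (f q')
    rw [← map_rename, ← map_rename, hc]

noncomputable def inducedMapIso (G : NatGraph) :
    SimpleGraph.induce (G.verts : Set ℕ) G.toSimpleGraph ≃g
      SimpleGraph.induce ((G.map f).verts : Set ℕ) (G.map f).toSimpleGraph where
  toEquiv := (Equiv.Set.image f _ f.injective).trans (Equiv.setCongr (Finset.coe_map f _).symm)
  map_rel_iff' := map_adj_apply

theorem numComponents_map (G : NatGraph) : (G.map f).numComponents = G.numComponents :=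
  (Nat.card_congr (inducedMapIso G).connectedComponentEquiv).symm

def mapHom (G : NatGraph) : G.toSimpleGraph →g (G.map f).toSimpleGraph where
  toFun := f
  map_rel' h := map_adj_apply.2 h

theorem Peripheral.map {G : NatGraph} {a : ℕ} {C : G.toSimpleGraph.Walk a a}
    (hC : G.Peripheral C) : (G.map f).Peripheral (C.map (mapHom G)) := by
  obtain ⟨hcyc, hind, hnum⟩ := hC
  refine ⟨hcyc.map f.injective, ?_, ?_⟩
  · simp only [SimpleGraph.Walk.support_map, SimpleGraph.Walk.edges_map, List.mem_map]
    rintro _ ⟨x, hx, rfl⟩ _ ⟨y, hy, rfl⟩ hxy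
    exact ⟨s(x, y), hind x hx y hy (map_adj_apply.1 hxy), rfl⟩
  · have hsupp : (C.map (mapHom (f := f) G)).support.toFinset = C.support.toFinset.map f := by
      ext
      simp only [SimpleGraph.Walk.support_map, List.mem_toFinset, List.mem_map, Finset.mem_map]
      rfl
    rw [hsupp, ← map_deleteVerts, numComponents_map, numComponents_map]
    exact hnum

theorem AdmissibleContraction.map {G : NatGraph} {u v : ℕ} (h : G.AdmissibleContraction u v) :
    (G.map f).AdmissibleContraction (f u) (f v) := by
  obtain ⟨huv, w, a, C, huw, hwv, hC, hCuw, hCwv⟩ := h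
  refine ⟨f.injective.ne huv, f w, _, C.map (mapHom G), map_adj_apply.2 huw,
    map_adj_apply.2 hwv, hC.map, ?_, ?_⟩ <;> rw [SimpleGraph.Walk.edges_map]
  · exact List.mem_map_of_mem (f := Sym2.map f) hCuw
  · exact List.mem_map_of_mem (f := Sym2.map f) hCwv

theorem MinorStep.map {H G : NatGraph} (h : MinorStep H G) : MinorStep (H.map f) (G.map f) := by
  cases h with
  | deleteVert G x => rw [map_deleteVert]; exact .deleteVert _ _
  | deleteEdge G x y hxy => rw [map_deleteEdge]; exact .deleteEdge _ _ _ (map_adj_apply.2 hxy)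
  | contract G u v hadm =>
    obtain ⟨huv, w, -, -, -, hwv, -⟩ := id hadm
    rw [map_contract G (G.mem_of_adj hwv).2 huv.symm]
    exact .contract _ _ _ hadm.map

theorem IsBipMinorOf.map {H G : NatGraph} (h : H.IsBipMinorOf G) :
    (H.map f).IsBipMinorOf (G.map f) :=
  Relation.ReflTransGen.lift (NatGraph.map f) (fun _ _ => MinorStep.map) _ _ h

theorem IsCompleteBipartiteOn.map {G : NatGraph} {m n : ℕ} (h : G.IsCompleteBipartiteOn m n) :
    (G.map f).IsCompleteBipartiteOn m n := by
  obtain ⟨S, T, hS, hT, hST, hverts, hadj⟩ := h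
  refine ⟨S.map f, T.map f, by simpa, by simpa, (Finset.disjoint_map f).2 hST,
    by simp only [NatGraph.map, hverts, Finset.map_union], fun a b => ⟨?_, ?_⟩⟩
  · rintro ⟨p, q, hpq, rfl, rfl⟩
    simpa only [Finset.mem_map'] using (hadj p q).1 hpq
  · rintro (⟨ha, hb⟩ | ⟨ha, hb⟩) <;>
      obtain ⟨p, hp, rfl⟩ := Finset.mem_map.1 ha <;> obtain ⟨q, hq, rfl⟩ := Finset.mem_map.1 hb
    · exact map_adj_apply.2 ((hadj p q).2 (.inl ⟨hp, hq⟩))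
    · exact map_adj_apply.2 ((hadj p q).2 (.inr ⟨hp, hq⟩))

theorem map_ofEdges_adj {s : Finset ℕ} {E : List (ℕ × ℕ)}
    {h : ∀ p ∈ E, p.1 ∈ s ∧ p.2 ∈ s ∧ p.1 ≠ p.2} {x y : ℕ} :
    ((ofEdges s E h).map f).Adj x y ↔
      (x, y) ∈ E.map (Prod.map f f) ∨ (y, x) ∈ E.map (Prod.map f f) := by
  simp only [map, ofEdges_adj, List.mem_map, Prod.exists, Prod.map, Prod.mk.injEq]
  constructor
  · rintro ⟨p, q, hpq | hqp, rfl, rfl⟩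
    · exact .inl ⟨p, q, hpq, rfl, rfl⟩
    · exact .inr ⟨q, p, hqp, rfl, rfl⟩
  · rintro (⟨p, q, hpq, rfl, rfl⟩ | ⟨p, q, hpq, rfl, rfl⟩)
    · exact ⟨p, q, .inl hpq, rfl, rfl⟩
    · exact ⟨q, p, .inr hpq, rfl, rfl⟩

end Map

section Subdivision

def pathEdges (l : List ℕ) : List (ℕ × ℕ) := l.zip l.tail

theorem infix_pair_iff_mem_pathEdges {a b : ℕ} {l : List ℕ} :
    [a, b] <:+: l ↔ (a, b) ∈ pathEdges l := by
  induction l with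
  | nil => simp [pathEdges]
  | cons x l ih =>
    rw [List.infix_cons_iff, ih]
    cases l with
    | nil => simp [pathEdges]
    | cons y l => simp [pathEdges, List.cons_prefix_cons]

structure IsCompleteBipartiteBetween (K : NatGraph) (σs τs : List ℕ) : Prop where
  nodup : (σs ++ τs).Nodup
  mem_verts : ∀ x, x ∈ K.verts ↔ x ∈ σs ∨ x ∈ τs
  adj : ∀ x y, K.Adj x y ↔ (x ∈ σs ∧ y ∈ τs) ∨ (x ∈ τs ∧ y ∈ σs)

theorem IsCompleteBipartiteOn.exists_between {K : NatGraph} {m n : ℕ}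
    (h : K.IsCompleteBipartiteOn m n) :
    ∃ σs τs, σs.length = m ∧ τs.length = n ∧ K.IsCompleteBipartiteBetween σs τs := by
  obtain ⟨S, T, rfl, rfl, hST, hverts, hadj⟩ := h
  refine ⟨S.toList, T.toList, S.length_toList, T.length_toList, ⟨?_, ?_, ?_⟩⟩
  · exact List.nodup_append.2 ⟨S.nodup_toList, T.nodup_toList, fun a ha b hb hab =>
      Finset.disjoint_left.1 hST (Finset.mem_toList.1 ha) (hab ▸ Finset.mem_toList.1 hb)⟩
  · simp [hverts]
  · simpa using hadj

def subdivEdges (σs τs : List ℕ) (P : ℕ → ℕ → List ℕ) : List (ℕ × ℕ) :=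
  (σs ×ˢ τs).flatMap fun e => pathEdges (e.1 :: (P e.1 e.2 ++ [e.2]))

def subdivVerts (σs τs : List ℕ) (P : ℕ → ℕ → List ℕ) : List ℕ :=
  σs ++ τs ++ (σs ×ˢ τs).flatMap fun e => P e.1 e.2

theorem subdivEdges_congr {σs τs : List ℕ} {P Q : ℕ → ℕ → List ℕ}
    (h : ∀ x ∈ σs, ∀ y ∈ τs, P x y = Q x y) : subdivEdges σs τs P = subdivEdges σs τs Q :=
  List.flatMap_congr fun e he => by
    rw [h e.1 (List.mem_product.1 he).1 e.2 (List.mem_product.1 he).2]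

theorem subdivVerts_congr {σs τs : List ℕ} {P Q : ℕ → ℕ → List ℕ}
    (h : ∀ x ∈ σs, ∀ y ∈ τs, P x y = Q x y) : subdivVerts σs τs P = subdivVerts σs τs Q :=
  congrArg (σs ++ τs ++ ·) <| List.flatMap_congr fun e he =>
    h e.1 (List.mem_product.1 he).1 e.2 (List.mem_product.1 he).2

variable {K G : NatGraph} {P : ℕ → ℕ → List ℕ} {σs τs : List ℕ}

theorem IsSubdivDataOf.adj_iff_mem_subdivEdges (hsub : K.IsSubdivDataOf G P)
    (hK : K.IsCompleteBipartiteBetween σs τs) {a b : ℕ} :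
    G.Adj a b ↔ (a, b) ∈ subdivEdges σs τs P ∨ (b, a) ∈ subdivEdges σs τs P := by
  simp only [hsub.adj_iff, subdivEdges, List.mem_flatMap, List.mem_product, Prod.exists,
    ← infix_pair_iff_mem_pathEdges]
  constructor
  · rintro ⟨x, y, hxy, hab⟩
    rcases (hK.adj x y).1 hxy with hxy' | ⟨hx, hy⟩
    · exact .inl ⟨x, y, hxy', hab⟩
    · refine .inr ⟨y, x, ⟨hy, hx⟩, ?_⟩
      rw [hsub.rev hxy]
      simpa using List.reverse_infix.2 hab
  · rintro (⟨x, y, ⟨hx, hy⟩, hab⟩ | ⟨x, y, ⟨hx, hy⟩, hba⟩)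
    · exact ⟨x, y, (hK.adj x y).2 (.inl ⟨hx, hy⟩), hab⟩
    · exact (hsub.adj_iff a b).1
        (G.symm ((hsub.adj_iff b a).2 ⟨x, y, (hK.adj x y).2 (.inl ⟨hx, hy⟩), hba⟩))

theorem IsSubdivDataOf.verts_eq_subdivVerts (hsub : K.IsSubdivDataOf G P)
    (hK : K.IsCompleteBipartiteBetween σs τs) : G.verts = (subdivVerts σs τs P).toFinset := by
  refine Finset.coe_injective (hsub.verts_eq.trans ?_)
  ext v
  simp only [Set.mem_union, Finset.mem_coe, hK.mem_verts, Set.mem_ofPred_eq, hK.adj, subdivVerts,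
    List.coe_toFinset, List.mem_append, List.mem_flatMap, List.mem_product, Prod.exists]
  refine or_congr_right ⟨?_, fun ⟨x, y, hxy, hv⟩ => ⟨x, y, .inl hxy, hv⟩⟩
  rintro ⟨x, y, hxy | ⟨hx, hy⟩, hv⟩
  · exact ⟨x, y, hxy, hv⟩
  · refine ⟨y, x, ⟨hy, hx⟩, ?_⟩
    rwa [hsub.rev ((hK.adj y x).2 (.inl ⟨hy, hx⟩)), List.mem_reverse] at hv

theorem IsSubdivDataOf.nodup_subdivVerts (hsub : K.IsSubdivDataOf G P)
    (hK : K.IsCompleteBipartiteBetween σs τs) : (subdivVerts σs τs P).Nodup := by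
  obtain ⟨hσ, hτ, hστ⟩ := List.nodup_append.1 hK.nodup
  have hadj : ∀ x ∈ σs, ∀ y ∈ τs, K.Adj x y := fun x hx y hy => (hK.adj x y).2 (.inl ⟨hx, hy⟩)
  refine List.nodup_append.2 ⟨hK.nodup, List.nodup_flatMap.2 ⟨?_, ?_⟩, ?_⟩
  · rintro ⟨x, y⟩ hxy
    obtain ⟨hx, hy⟩ := List.mem_product.1 hxy
    exact (List.nodup_cons.1 (hsub.nodup (hadj x hx y hy))).2.sublist
      (List.sublist_append_left _ _)
  · refine (hσ.product hτ).pairwise_of_forall_ne fun ⟨x, y⟩ hxy ⟨x', y'⟩ hxy' hne v hv hv' => ?_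
    obtain ⟨hx, hy⟩ := List.mem_product.1 hxy
    obtain ⟨hx', hy'⟩ := List.mem_product.1 hxy'
    refine hsub.disj (hadj x hx y hy) (hadj x' hx' y' hy') (fun heq => ?_) v hv hv'
    rcases Sym2.eq_iff.1 heq with ⟨rfl, rfl⟩ | ⟨rfl, rfl⟩
    · exact hne rfl
    · exact hστ x hx x hy' rfl
  · rintro v hv _ hw rfl
    obtain ⟨⟨x, y⟩, hxy, hw⟩ := List.mem_flatMap.1 hw
    obtain ⟨hx, hy⟩ := List.mem_product.1 hxy
    exact hsub.interior_new (hadj x hx y hy) v hw ((hK.mem_verts v).2 (List.mem_append.1 hv))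

/-- Indices past the end of `L` are sent beyond `L.sum`, hence outside `L`. -/
def listEmbedding (L : List ℕ) (hL : L.Nodup) : ℕ ↪ ℕ where
  toFun n := L.getD n (n + L.sum + 1)
  inj' a b hab := by
    have past_end (n : ℕ) (hn : n < L.length) (m : ℕ) :
        L.getD n (n + L.sum + 1) ≠ m + L.sum + 1 := by
      rw [List.getD_eq_getElem _ _ hn]
      have := List.le_sum_of_mem (L.getElem_mem hn)
      omega
    simp only at hab
    by_cases ha : a < L.length <;> by_cases hb : b < L.length
    · rwa [List.getD_eq_getElem _ _ ha, List.getD_eq_getElem _ _ hb, hL.getElem_inj_iff] at hab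
    · exact absurd (hab.trans (L.getD_eq_default _ (not_lt.1 hb))) (past_end a ha b)
    · exact absurd (hab.symm.trans (L.getD_eq_default _ (not_lt.1 ha))) (past_end b hb a)
    · rw [L.getD_eq_default _ (not_lt.1 ha), L.getD_eq_default _ (not_lt.1 hb)] at hab
      omega

theorem map_range_listEmbedding (L : List ℕ) (hL : L.Nodup) :
    (Finset.range L.length).map (listEmbedding L hL) = L.toFinset := by
  ext v
  simp only [Finset.mem_map, Finset.mem_range, List.mem_toFinset, List.mem_iff_getElem]
  constructor
  · rintro ⟨n, hn, rfl⟩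
    exact ⟨n, hn, (List.getD_eq_getElem _ _ hn).symm⟩
  · rintro ⟨n, hn, rfl⟩
    exact ⟨n, hn, List.getD_eq_getElem _ _ hn⟩

end Subdivision

end NatGraph

namespace NatGraph.BaryK33

/-- Vertex `i` is `sᵢ`, vertex `j + 3` is `tⱼ` and vertex `3 i + j + 6` is `zᵢⱼ`; for instance
`G₁` contracts `z₁₀ = 9` onto `z₀₀ = 6`. -/
abbrev edges₀ : List (ℕ × ℕ) := subdivEdges [0, 1, 2] [3, 4, 5] fun i j => [3 * i + j + 3]
abbrev edges₁ : List (ℕ × ℕ) := contractEdges 9 6 edges₀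
abbrev edges₂ : List (ℕ × ℕ) := contractEdges 12 6 edges₁
abbrev edges₃ : List (ℕ × ℕ) := deleteVertsEdges {3} edges₂
abbrev edges₄ : List (ℕ × ℕ) := contractEdges 10 7 edges₃
abbrev edges₅ : List (ℕ × ℕ) := contractEdges 13 7 edges₄
abbrev edges₆ : List (ℕ × ℕ) := deleteVertsEdges {4} edges₅
abbrev edges₇ : List (ℕ × ℕ) := contractEdges 11 8 edges₆
abbrev edges₈ : List (ℕ × ℕ) := contractEdges 14 8 edges₇
abbrev edges₉ : List (ℕ × ℕ) := deleteVertsEdges {5} edges₈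

abbrev G₀ : NatGraph := ofEdges (Finset.range 15) edges₀ (by decide)
abbrev G₁ : NatGraph := ofEdges (G₀.verts.erase 9) edges₁ (by decide)
abbrev G₂ : NatGraph := ofEdges (G₁.verts.erase 12) edges₂ (by decide)
abbrev G₃ : NatGraph := ofEdges (G₂.verts \ {3}) edges₃ (by decide)
abbrev G₄ : NatGraph := ofEdges (G₃.verts.erase 10) edges₄ (by decide)
abbrev G₅ : NatGraph := ofEdges (G₄.verts.erase 13) edges₅ (by decide)
abbrev G₆ : NatGraph := ofEdges (G₅.verts \ {4}) edges₆ (by decide)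
abbrev G₇ : NatGraph := ofEdges (G₆.verts.erase 11) edges₇ (by decide)
abbrev G₈ : NatGraph := ofEdges (G₇.verts.erase 14) edges₈ (by decide)
abbrev G₉ : NatGraph := ofEdges (G₈.verts \ {5}) edges₉ (by decide)

theorem G₀_admissibleContraction : G₀.AdmissibleContraction 9 6 :=
  let C : G₀.toSimpleGraph.Walk 6 6 :=
    .ofSupport [6, 3, 9, 1, 10, 4, 7, 0, 6] (by simp) (by decide)
  (peripheral_of_rank (C.isCycle_def.2 ⟨⟨by decide⟩, by simp [C], by decide⟩) (by decide)
    2 [2, 12, 13, 14, 5, 8, 11].idxOf (by decide) (by decide)).admissibleContraction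
    (w := 3) (by decide) (by decide) (by decide)

theorem G₁_admissibleContraction : G₁.AdmissibleContraction 12 6 :=
  let C : G₁.toSimpleGraph.Walk 6 6 :=
    .ofSupport [6, 3, 12, 2, 13, 4, 7, 0, 6] (by simp) (by decide)
  (peripheral_of_rank (C.isCycle_def.2 ⟨⟨by decide⟩, by simp [C], by decide⟩) (by decide)
    1 [1, 10, 11, 5, 8, 14].idxOf (by decide) (by decide)).admissibleContraction
    (w := 3) (by decide) (by decide) (by decide)

theorem G₃_admissibleContraction : G₃.AdmissibleContraction 10 7 :=
  let C : G₃.toSimpleGraph.Walk 7 7 :=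
    .ofSupport [7, 4, 10, 1, 11, 5, 8, 0, 7] (by simp) (by decide)
  (peripheral_of_rank (C.isCycle_def.2 ⟨⟨by decide⟩, by simp [C], by decide⟩) (by decide)
    2 [2, 6, 13, 14].idxOf (by decide) (by decide)).admissibleContraction
    (w := 4) (by decide) (by decide) (by decide)

theorem G₄_admissibleContraction : G₄.AdmissibleContraction 13 7 :=
  let C : G₄.toSimpleGraph.Walk 7 7 :=
    .ofSupport [7, 4, 13, 2, 14, 5, 8, 0, 7] (by simp) (by decide)
  (peripheral_of_rank (C.isCycle_def.2 ⟨⟨by decide⟩, by simp [C], by decide⟩) (by decide)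
    1 [1, 6, 11].idxOf (by decide) (by decide)).admissibleContraction
    (w := 4) (by decide) (by decide) (by decide)

theorem G₆_admissibleContraction : G₆.AdmissibleContraction 11 8 :=
  let C : G₆.toSimpleGraph.Walk 8 8 :=
    .ofSupport [8, 5, 11, 1, 6, 0, 8] (by simp) (by decide)
  (peripheral_of_rank (C.isCycle_def.2 ⟨⟨by decide⟩, by simp [C], by decide⟩) (by decide)
    2 [2, 7, 14].idxOf (by decide) (by decide)).admissibleContraction
    (w := 5) (by decide) (by decide) (by decide)

theorem G₇_admissibleContraction : G₇.AdmissibleContraction 14 8 :=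
  let C : G₇.toSimpleGraph.Walk 8 8 :=
    .ofSupport [8, 5, 14, 2, 6, 0, 8] (by simp) (by decide)
  (peripheral_of_rank (C.isCycle_def.2 ⟨⟨by decide⟩, by simp [C], by decide⟩) (by decide)
    1 [1, 7].idxOf (by decide) (by decide)).admissibleContraction
    (w := 5) (by decide) (by decide) (by decide)

theorem G₉_isBipMinorOf_G₀ : G₉.IsBipMinorOf G₀ :=
  .head (.ofEdges_deleteVert 5 : MinorStep G₉ G₈) <|
  .head (.ofEdges_contract G₇_admissibleContraction : MinorStep G₈ G₇) <|
  .head (.ofEdges_contract G₆_admissibleContraction : MinorStep G₇ G₆) <|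
  .head (.ofEdges_deleteVert 4 : MinorStep G₆ G₅) <|
  .head (.ofEdges_contract G₄_admissibleContraction : MinorStep G₅ G₄) <|
  .head (.ofEdges_contract G₃_admissibleContraction : MinorStep G₄ G₃) <|
  .head (.ofEdges_deleteVert 3 : MinorStep G₃ G₂) <|
  .head (.ofEdges_contract G₁_admissibleContraction : MinorStep G₂ G₁) <|
  .single (.ofEdges_contract G₀_admissibleContraction : MinorStep G₁ G₀)

theorem G₉_isCompleteBipartiteOn : G₉.IsCompleteBipartiteOn 3 3 :=
  isCompleteBipartiteOn_ofEdges {0, 1, 2} {6, 7, 8} rfl rfl (by decide) (by decide) (by decide)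
    (by decide)

theorem exists_eq_map_G₀ {K G : NatGraph} {P : ℕ → ℕ → List ℕ} (hK : K.IsCompleteBipartiteOn 3 3)
    (hsub : K.IsSubdivDataOf G P) (honce : ∀ x y, K.Adj x y → (P x y).length = 1) :
    ∃ f : ℕ ↪ ℕ, G = G₀.map f := by
  obtain ⟨σs, τs, hσ, hτ, hK⟩ := hK.exists_between
  obtain ⟨a, b, c, rfl⟩ := List.length_eq_three.1 hσ
  obtain ⟨d, e, g, rfl⟩ := List.length_eq_three.1 hτ
  have hP : ∀ x ∈ [a, b, c], ∀ y ∈ [d, e, g], P x y = [(P x y).headD 0] := fun x hx y hy => by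
    obtain ⟨w, hw⟩ := List.length_eq_one_iff.1 (honce x y ((hK.adj x y).2 (.inl ⟨hx, hy⟩)))
    rw [hw]
    rfl
  have hnodup := subdivVerts_congr hP ▸ hsub.nodup_subdivVerts hK
  refine ⟨listEmbedding _ hnodup, NatGraph.ext ?_ fun x y => ?_⟩
  -- what is left holds by evaluation: the embedding lists the vertices of `G` in the order of `G₀`
  · rw [hsub.verts_eq_subdivVerts hK, subdivVerts_congr hP, ← map_range_listEmbedding _ hnodup]
    rfl
  · rw [hsub.adj_iff_mem_subdivEdges hK, subdivEdges_congr hP, map_ofEdges_adj]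
    rfl

end NatGraph.BaryK33

/-- `K₃,₃` is a bipartite minor of the barycentric subdivision of `K₃,₃`,
i.e., of the graph obtained from `K₃,₃` by subdividing every edge exactly once. -/
theorem k33_minor_of_barycentric_K33 (G K : NatGraph) (P : ℕ → ℕ → List ℕ)
    (hK : K.IsCompleteBipartiteOn 3 3) (hsub : NatGraph.IsSubdivDataOf K G P)
    (honce : ∀ x y : ℕ, K.Adj x y → (P x y).length = 1) :
    G.HasK33BipMinor := by
  obtain ⟨f, rfl⟩ := NatGraph.BaryK33.exists_eq_map_G₀ hK hsub honce
  exact ⟨_, NatGraph.BaryK33.G₉_isCompleteBipartiteOn.map, NatGraph.BaryK33.G₉_isBipMinorOf_G₀.map⟩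
end
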